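/- arXiv:1304.3179 — 3 statements merged into one kernel-verified Lean document; each statement's English description precedes it below -/
import Mathlib

section
/- Fix the block setup and the function $g_S(A,\Omega)$ defined in the context, with $A \in \mathbb{C}^{n_B \times n_M}$ arbitrary and $\Omega \in \mathbb{C}^{n_B \times n_B}$ Hermitian positive definite. Then $g$ is supermodular and normalized: $g_{\emptyset}(A,\Omega) = 0$, and for all subsets $S, T \subseteq \{1,\dots,N_B\}$, $g_S(A,\Omega) + g_T(A,\Omega) \le g_{S \cup T}(A,\Omega) + g_{S \cap T}(A,\Omega)$. -/
open Matrix
open scoped ComplexOrder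

/-- Base-2 logarithm of the (real part of the) determinant of a complex matrix. -/
noncomputable def logdet2 {ι : Type*} [Fintype ι] [DecidableEq ι]
    (M : Matrix ι ι ℂ) : ℝ :=
  Real.logb 2 M.det.re

/-- Block submatrix `M_{S,T}`: keep the rows whose block index lies in `S` and the
columns whose block index lies in `T`. -/
def blockSub {NB : ℕ} {nb : Fin NB → ℕ}
    (M : Matrix (Σ i, Fin (nb i)) (Σ i, Fin (nb i)) ℂ) (S T : Finset (Fin NB)) :
    Matrix {p : Σ i, Fin (nb i) // p.1 ∈ S} {p : Σ i, Fin (nb i) // p.1 ∈ T} ℂ :=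
  M.submatrix Subtype.val Subtype.val

/-- The backhaul constraint function
`g_S(A,Ω) = ∑_{i ∈ S} log₂ det((AA†)_{i,i} + Ω_{i,i}) - log₂ det(Ω_{S,S})`. -/
noncomputable def gFun {NB nM : ℕ} {nb : Fin NB → ℕ}
    (A : Matrix (Σ i, Fin (nb i)) (Fin nM) ℂ)
    (Ω : Matrix (Σ i, Fin (nb i)) (Σ i, Fin (nb i)) ℂ) (S : Finset (Fin NB)) : ℝ :=
  (∑ i ∈ S, logdet2 (blockSub (A * Aᴴ) {i} {i} + blockSub Ω {i} {i})) -
    logdet2 (blockSub Ω S S)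

/-!
The block sums are modular in `S`, so everything rests on submodularity of
`S ↦ log det Ω_{S,S}` for positive definite `Ω`. Adjoining an index `k ∉ s` multiplies
`det Ω_s` by the Schur complement `Ω_kk - Ω_{k,s} Ω_s⁻¹ Ω_{s,k}`, and this complement decreases
as `s` grows, because the quadratic form `vᴴ Ω_s⁻¹ v` of a compression never exceeds that of
the full matrix. So the marginal gains of `log det` decrease along inclusions, which is
submodularity.
-/

open Finset Function

namespace Matrix

section QuadraticForm

variable {𝕜 : Type*} [RCLike 𝕜] {m n : Type*} [Fintype m] [Fintype n] [DecidableEq m]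
  [DecidableEq n]

-- The gap is `zᴴ B z ≥ 0` for `z = P x - B⁻¹ v`, where `x = (Pᴴ B P)⁻¹ Pᴴ v`.
theorem PosDef.star_dotProduct_inv_mulVec_compress_le {B : Matrix n n 𝕜} (hB : B.PosDef)
    (P : Matrix n m 𝕜) (hP : IsUnit (Pᴴ * B * P).det) (v : n → 𝕜) :
    star (Pᴴ *ᵥ v) ⬝ᵥ ((Pᴴ * B * P)⁻¹ *ᵥ (Pᴴ *ᵥ v)) ≤ star v ⬝ᵥ (B⁻¹ *ᵥ v) := by
  set w := Pᴴ *ᵥ v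
  have hw : star w = star v ᵥ* P := by
    rw [star_mulVec, conjTranspose_conjTranspose]
  obtain ⟨x, hx⟩ : ∃ x, (Pᴴ * B * P)⁻¹ *ᵥ w = x := ⟨_, rfl⟩
  obtain ⟨u, hu⟩ : ∃ u, B⁻¹ *ᵥ v = u := ⟨_, rfl⟩
  have hBu : B *ᵥ u = v := by
    rw [← hu, mulVec_mulVec, mul_nonsing_inv _ ((isUnit_iff_isUnit_det B).mp hB.isUnit),
      one_mulVec]
  have hBPx : Pᴴ *ᵥ (B *ᵥ (P *ᵥ x)) = w := by
    rw [mulVec_mulVec, mulVec_mulVec, ← hx, mulVec_mulVec,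
      mul_nonsing_inv _ hP, one_mulVec]
  have huB : star u ᵥ* B = star v := by
    rw [← hBu, star_mulVec, hB.1.eq]
  have hgap : star (P *ᵥ x - u) ⬝ᵥ (B *ᵥ (P *ᵥ x - u)) =
      star v ⬝ᵥ (B⁻¹ *ᵥ v) - star w ⬝ᵥ x := by
    have h1 : star (P *ᵥ x) ⬝ᵥ (B *ᵥ (P *ᵥ x)) = star x ⬝ᵥ w := by
      rw [star_mulVec, ← dotProduct_mulVec, hBPx]
    have h2 : star (P *ᵥ x) ⬝ᵥ v = star x ⬝ᵥ w := by
      rw [star_mulVec, ← dotProduct_mulVec]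
    have h3 : star u ⬝ᵥ (B *ᵥ (P *ᵥ x)) = star w ⬝ᵥ x := by
      rw [dotProduct_mulVec, huB, dotProduct_mulVec, hw]
    have h4 : star u ⬝ᵥ v = star v ⬝ᵥ (B⁻¹ *ᵥ v) := by
      rw [← hu, star_mulVec, ← dotProduct_mulVec, hB.1.inv.eq]
    rw [mulVec_sub, hBu, star_sub, sub_dotProduct, dotProduct_sub, dotProduct_sub, h1, h2, h3, h4]
    ring
  rw [hx, ← sub_nonneg, ← hgap]
  exact hB.posSemidef.dotProduct_mulVec_nonneg _

theorem PosDef.star_dotProduct_inv_mulVec_submatrix_le {B : Matrix n n 𝕜} (hB : B.PosDef)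
    {e : m → n} (he : Injective e) (v : n → 𝕜) :
    star (v ∘ e) ⬝ᵥ ((B.submatrix e e)⁻¹ *ᵥ (v ∘ e)) ≤ star v ⬝ᵥ (B⁻¹ *ᵥ v) := by
  set P : Matrix n m 𝕜 := (1 : Matrix n n 𝕜).submatrix id e
  have hPBP : Pᴴ * B * P = B.submatrix e e := by
    ext i j
    simp [P, mul_apply, one_apply]
  have hPv : Pᴴ *ᵥ v = v ∘ e := by
    ext i
    simp [P, mulVec, dotProduct, one_apply]
  have h := hB.star_dotProduct_inv_mulVec_compress_le P
    (by rw [hPBP]; exact (isUnit_iff_isUnit_det _).mp (hB.submatrix he).isUnit) v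
  rwa [hPBP, hPv] at h

end QuadraticForm

section Principal

variable {ι R : Type*}

abbrev principalSubmatrix (M : Matrix ι ι R) (s : Finset ι) : Matrix s s R :=
  M.submatrix (↑) (↑)

theorem PosDef.principalSubmatrix [Ring R] [PartialOrder R] [StarRing R] {M : Matrix ι ι R}
    (hM : M.PosDef) (s : Finset ι) : (M.principalSubmatrix s).PosDef :=
  hM.submatrix Subtype.val_injective

variable [DecidableEq ι] [CommRing R]

noncomputable def schurComplementAt (M : Matrix ι ι R) (s : Finset ι) (k : ι) : R :=
  M k k - (fun i : s => M k i) ⬝ᵥ ((M.principalSubmatrix s)⁻¹ *ᵥ fun i : s => M i k)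

theorem det_principalSubmatrix_insert (M : Matrix ι ι R) {s : Finset ι} {k : ι} (hk : k ∉ s)
    (hs : IsUnit (M.principalSubmatrix s).det) :
    (M.principalSubmatrix (insert k s)).det =
      (M.principalSubmatrix s).det * M.schurComplementAt s k := by
  let _ := (M.principalSubmatrix s).invertibleOfIsUnitDet hs
  let e : s ⊕ Unit ≃ (insert k s : Finset ι) :=
    ((subtypeInsertEquivOption hk).trans (Equiv.optionEquivSumPUnit _)).symm
  have hblocks : (M.principalSubmatrix (insert k s)).submatrix e e =
      fromBlocks (M.principalSubmatrix s) (of fun i _ => M i k) (of fun _ j => M k j)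
        (of fun _ _ => M k k) := by
    ext (i | i) (j | j) <;> rfl
  rw [← det_submatrix_equiv_self e, hblocks, det_fromBlocks₁₁]
  congr 1
  rw [det_unique, invOf_eq_nonsing_inv, Matrix.mul_assoc]
  rfl

end Principal

section LogDet

variable {ι : Type*} [DecidableEq ι] {M : Matrix ι ι ℂ} {s t : Finset ι} {k : ι}

theorem PosDef.schurComplementAt_antitone (hM : M.PosDef) (hst : s ⊆ t) (k : ι) :
    M.schurComplementAt t k ≤ M.schurComplementAt s k := by
  have hrow (u : Finset ι) : (fun i : u => M k i) = star fun i : u => M i k :=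
    funext fun i => (hM.1.apply k i).symm
  have h := (hM.principalSubmatrix t).star_dotProduct_inv_mulVec_submatrix_le
    (e := fun i : s => (⟨i, hst i.2⟩ : t)) (fun _ _ h => Subtype.ext (Subtype.mk.inj h))
    (fun i : t => M i k)
  rw [schurComplementAt, schurComplementAt, hrow, hrow]
  exact sub_le_sub_left h _

theorem PosDef.schurComplementAt_pos (hM : M.PosDef) (hk : k ∉ s) :
    0 < M.schurComplementAt s k := by
  have hs := (hM.principalSubmatrix s).det_pos
  have hks := (hM.principalSubmatrix (insert k s)).det_pos
  rw [det_principalSubmatrix_insert M hk hs.ne'.isUnit] at hks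
  simpa [inv_mul_cancel_left₀ hs.ne'] using mul_pos (inv_pos.mpr hs) hks

theorem PosDef.logdet2_principalSubmatrix_insert (hM : M.PosDef) (hk : k ∉ s) :
    logdet2 (M.principalSubmatrix (insert k s)) =
      logdet2 (M.principalSubmatrix s) + Real.logb 2 (M.schurComplementAt s k).re := by
  have hs := (hM.principalSubmatrix s).det_pos
  obtain ⟨hs_re, hs_im⟩ := Complex.pos_iff.mp hs
  obtain ⟨hc_re, -⟩ := Complex.pos_iff.mp (hM.schurComplementAt_pos hk)
  rw [logdet2, det_principalSubmatrix_insert M hk hs.ne'.isUnit, Complex.mul_re, ← hs_im,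
    zero_mul, sub_zero, Real.logb_mul hs_re.ne' hc_re.ne', logdet2]

theorem PosDef.logdet2_insert_sub_antitone (hM : M.PosDef) (hst : s ⊆ t) (hk : k ∉ t) :
    logdet2 (M.principalSubmatrix (insert k t)) - logdet2 (M.principalSubmatrix t) ≤
      logdet2 (M.principalSubmatrix (insert k s)) - logdet2 (M.principalSubmatrix s) := by
  rw [hM.logdet2_principalSubmatrix_insert hk,
    hM.logdet2_principalSubmatrix_insert fun h => hk (hst h), add_sub_cancel_left,
    add_sub_cancel_left]
  exact Real.logb_le_logb_of_le one_lt_two (Complex.pos_iff.mp (hM.schurComplementAt_pos hk)).1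
    (Complex.le_def.mp (hM.schurComplementAt_antitone hst k)).1

theorem PosDef.logdet2_union_sub_antitone (hM : M.PosDef) (hst : s ⊆ t) {r : Finset ι}
    (hrt : Disjoint r t) :
    logdet2 (M.principalSubmatrix (r ∪ t)) - logdet2 (M.principalSubmatrix t) ≤
      logdet2 (M.principalSubmatrix (r ∪ s)) - logdet2 (M.principalSubmatrix s) := by
  induction r using Finset.induction_on with
  | empty => rw [empty_union, empty_union, sub_self, sub_self]
  | insert k r hkr ih =>
    rw [disjoint_insert_left] at hrt
    have hstep := hM.logdet2_insert_sub_antitone (union_subset_union_right hst)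
      (show k ∉ r ∪ t by simp [hkr, hrt.1])
    rw [insert_union, insert_union]
    linarith [ih hrt.2]

theorem PosDef.logdet2_principalSubmatrix_union_add_inter_le (hM : M.PosDef) (s t : Finset ι) :
    logdet2 (M.principalSubmatrix (s ∪ t)) + logdet2 (M.principalSubmatrix (s ∩ t)) ≤
      logdet2 (M.principalSubmatrix s) + logdet2 (M.principalSubmatrix t) := by
  have h := hM.logdet2_union_sub_antitone (inter_subset_left : s ∩ t ⊆ s)
    (sdiff_disjoint : Disjoint (t \ s) s)
  rw [sdiff_union_self_eq_union, union_comm, inter_comm, sdiff_union_inter, inter_comm] at h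
  linarith

end LogDet

end Matrix

section Blocks

variable {NB : ℕ} {nb : Fin NB → ℕ}

def blockSupport (S : Finset (Fin NB)) : Finset (Σ i, Fin (nb i)) :=
  {p | p.1 ∈ S}

@[simp]
theorem mem_blockSupport {S : Finset (Fin NB)} {p : Σ i, Fin (nb i)} :
    p ∈ blockSupport S ↔ p.1 ∈ S := by
  simp [blockSupport]

theorem blockSupport_union (S T : Finset (Fin NB)) :
    blockSupport (nb := nb) (S ∪ T) = blockSupport S ∪ blockSupport T := by
  ext; simp

theorem blockSupport_inter (S T : Finset (Fin NB)) :
    blockSupport (nb := nb) (S ∩ T) = blockSupport S ∩ blockSupport T := by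
  ext; simp

theorem logdet2_blockSub_self (M : Matrix (Σ i, Fin (nb i)) (Σ i, Fin (nb i)) ℂ)
    (S : Finset (Fin NB)) :
    logdet2 (blockSub M S S) = logdet2 (M.principalSubmatrix (blockSupport S)) := by
  let e : {p : Σ i, Fin (nb i) // p.1 ∈ S} ≃ blockSupport S :=
    Equiv.subtypeEquivRight fun _ => mem_blockSupport.symm
  rw [logdet2, logdet2, ← det_submatrix_equiv_self e]
  rfl

theorem gFun_empty {nM : ℕ} (A : Matrix (Σ i, Fin (nb i)) (Fin nM) ℂ)
    (Ω : Matrix (Σ i, Fin (nb i)) (Σ i, Fin (nb i)) ℂ) : gFun A Ω ∅ = 0 := by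
  have : IsEmpty {p : Σ i, Fin (nb i) // p.1 ∈ (∅ : Finset (Fin NB))} :=
    ⟨fun p => notMem_empty _ p.2⟩
  simp [gFun, logdet2, det_isEmpty]

end Blocks

/-- `g` is normalized and supermodular. -/
theorem gFun_normalized_supermodular {NB nM : ℕ} {nb : Fin NB → ℕ}
    (A : Matrix (Σ i, Fin (nb i)) (Fin nM) ℂ)
    (Ω : Matrix (Σ i, Fin (nb i)) (Σ i, Fin (nb i)) ℂ) (hΩ : Ω.PosDef) :
    gFun A Ω ∅ = 0 ∧
      ∀ S T : Finset (Fin NB),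
        gFun A Ω S + gFun A Ω T ≤ gFun A Ω (S ∪ T) + gFun A Ω (S ∩ T) := by
  refine ⟨gFun_empty A Ω, fun S T => ?_⟩
  have hsum := sum_union_inter (s₁ := S) (s₂ := T)
    (f := fun i => logdet2 (blockSub (A * Aᴴ) {i} {i} + blockSub Ω {i} {i}))
  have hlogdet := hΩ.logdet2_principalSubmatrix_union_add_inter_le (blockSupport S)
    (blockSupport T)
  rw [← blockSupport_union, ← blockSupport_inter] at hlogdet
  simp only [gFun, logdet2_blockSub_self]
  linarith
end

section
/- Fix the block setup and the function $g_S(A,\Omega)$ defined in the context, with $A \in \mathbb{C}^{n_B \times n_M}$ arbitrary and $\Omega \in \mathbb{C}^{n_B \times n_B}$ Hermitian positive definite. Then $g$ is monotone nondecreasing: for all subsets $S \subseteq T \subseteq \{1,\dots,N_B\}$, $0 \le g_S(A,\Omega) \le g_T(A,\Omega)$. -/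
open Matrix
open scoped ComplexOrder

/-! Fischer's inequality `det Ω_{S ∪ U} ≤ det Ω_S · det Ω_U` for disjoint `S, U` (the Schur
complement of a positive definite matrix lies below its diagonal block in the Loewner order, and
`det` is monotone there) makes `g` superadditive over disjoint unions. Iterating Fischer over
singletons and using `Ω ≤ AA† + Ω` gives `det Ω_S ≤ ∏_{i ∈ S} det (AA† + Ω)_{i,i}`, i.e. `g_S ≥ 0`;
hence `g_T ≥ g_S + g_{T \ S} ≥ g_S`. -/

namespace Matrix

open scoped MatrixOrder

variable {m n 𝕜 : Type*} [Fintype m] [Fintype n] [DecidableEq m] [DecidableEq n] [RCLike 𝕜]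

lemma PosSemidef.one_le_det_one_add {R : Matrix n n 𝕜} (hR : R.PosSemidef) :
    1 ≤ (1 + R).det := by
  have h : 1 + R = cfc (fun x : ℝ => 1 + x) R := by
    rw [cfc_const_add 1 (fun x => x) R, cfc_id' ℝ R]
    simp
  rw [h, hR.1.cfc_eq]
  simp only [IsHermitian.cfc, det_map, det_diagonal, Function.comp_apply, map_add, map_one]
  have h1 : (1 : ℝ) ≤ ∏ i, (1 + hR.1.eigenvalues i) :=
    Finset.one_le_prod fun i _ => le_add_of_nonneg_right (hR.eigenvalues_nonneg i)
  simpa [RCLike.algebraMap_eq_ofReal] using (RCLike.ofReal_le_ofReal (K := 𝕜)).mpr h1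

lemma PosSemidef.det_le_det_add {Q N : Matrix n n 𝕜} (hQ : Q.PosSemidef) (hN : N.PosSemidef) :
    Q.det ≤ (Q + N).det := by
  by_cases hQ0 : Q.det = 0
  · simpa [hQ0] using (hQ.add hN).det_nonneg
  set S := CFC.sqrt Q
  have hSS : S * S = Q := CFC.sqrt_mul_sqrt_self Q hQ.nonneg
  have hS : IsUnit S.det := isUnit_iff_ne_zero.mpr fun h =>
    hQ0 (by rw [← hSS, det_mul, h, zero_mul])
  have hR : (S⁻¹ * N * S⁻¹).PosSemidef := by
    have h := hN.mul_mul_conjTranspose_same S⁻¹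
    rwa [(CFC.sqrt_nonneg Q).posSemidef.isHermitian.inv.eq] at h
  have hdecomp : Q + N = S * (1 + S⁻¹ * N * S⁻¹) * S := by
    rw [Matrix.mul_add, Matrix.add_mul, Matrix.mul_one, hSS, ← Matrix.mul_assoc,
      ← Matrix.mul_assoc, mul_nonsing_inv _ hS, Matrix.one_mul, Matrix.mul_assoc,
      nonsing_inv_mul _ hS, Matrix.mul_one]
  calc Q.det = Q.det * 1 := (mul_one _).symm
    _ ≤ Q.det * (1 + S⁻¹ * N * S⁻¹).det :=
      mul_le_mul_of_nonneg_left hR.one_le_det_one_add hQ.det_nonneg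
    _ = (Q + N).det := by rw [hdecomp, det_mul, det_mul, ← hSS, det_mul]; ring

lemma PosDef.det_le_det_toBlocks₁₁_mul_det_toBlocks₂₂ {M : Matrix (m ⊕ n) (m ⊕ n) 𝕜}
    (hM : M.PosDef) : M.det ≤ M.toBlocks₁₁.det * M.toBlocks₂₂.det := by
  have hA : M.toBlocks₁₁.PosDef := hM.submatrix Sum.inl_injective
  rw [← fromBlocks_toBlocks M] at hM ⊢
  obtain ⟨-, hBC, -, -⟩ := isHermitian_fromBlocks_iff.mp hM.isHermitian
  set A := M.toBlocks₁₁
  set B := M.toBlocks₁₂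
  set D := M.toBlocks₂₂
  rw [← hBC] at hM ⊢
  have := hA.isUnit.invertible
  have hSchur : (D - Bᴴ * A⁻¹ * B).PosSemidef := (hA.fromBlocks₁₁ B D).mp hM.posSemidef
  have hD : (D - Bᴴ * A⁻¹ * B).det ≤ D.det := by
    simpa using hSchur.det_le_det_add (hA.inv.posSemidef.conjTranspose_mul_mul_same B)
  rw [det_fromBlocks₁₁, invOf_eq_nonsing_inv]
  exact mul_le_mul_of_nonneg_left hD hA.det_pos.le

lemma PosDef.re_det_pos {M : Matrix n n ℂ} (hM : M.PosDef) : 0 < M.det.re :=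
  (Complex.pos_iff.mp hM.det_pos).1

lemma PosDef.ofReal_re_det {M : Matrix n n ℂ} (hM : M.PosDef) : (M.det.re : ℂ) = M.det :=
  (Complex.eq_re_of_ofReal_le (r := 0) (by simpa using hM.det_pos.le)).symm

end Matrix

section blockSub

variable {NB : ℕ} {nb : Fin NB → ℕ} {Ω N : Matrix (Σ i, Fin (nb i)) (Σ i, Fin (nb i)) ℂ}

lemma Matrix.PosDef.blockSub (hΩ : Ω.PosDef) (S : Finset (Fin NB)) :
    (blockSub Ω S S).PosDef :=
  hΩ.submatrix Subtype.val_injective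

lemma det_blockSub_union_le (hΩ : Ω.PosDef) {S U : Finset (Fin NB)} (hSU : Disjoint S U) :
    (blockSub Ω (S ∪ U) (S ∪ U)).det ≤ (blockSub Ω S S).det * (blockSub Ω U U).det := by
  let e : {p : Σ i, Fin (nb i) // p.1 ∈ S ∪ U} ≃
      {p : Σ i, Fin (nb i) // p.1 ∈ S} ⊕ {p : Σ i, Fin (nb i) // p.1 ∈ U} :=
    (Equiv.subtypeEquivRight fun p => Finset.mem_union).trans
      (subtypeOrEquiv _ _ (Pi.disjoint_iff.mpr fun p => by
        simpa using fun h => Finset.disjoint_left.mp hSU h))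
  have h := ((hΩ.blockSub (S ∪ U)).submatrix e.symm.injective)
    |>.det_le_det_toBlocks₁₁_mul_det_toBlocks₂₂
  rwa [det_submatrix_equiv_self] at h

lemma det_blockSub_le_prod (hΩ : Ω.PosDef) (S : Finset (Fin NB)) :
    (blockSub Ω S S).det ≤ ∏ i ∈ S, (blockSub Ω {i} {i}).det := by
  induction S using Finset.induction_on with
  | empty =>
    have : IsEmpty {p : Σ i, Fin (nb i) // p.1 ∈ (∅ : Finset (Fin NB))} :=
      ⟨fun p => Finset.notMem_empty _ p.2⟩
    simp
  | insert a S ha ih =>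
    rw [Finset.prod_insert ha, Finset.insert_eq]
    calc _ ≤ (blockSub Ω {a} {a}).det * (blockSub Ω S S).det :=
          det_blockSub_union_le hΩ (Finset.disjoint_singleton_left.mpr ha)
      _ ≤ _ := mul_le_mul_of_nonneg_left ih (hΩ.blockSub {a}).det_pos.le

lemma det_blockSub_le_prod_det_blockSub_add (hΩ : Ω.PosDef) (hN : N.PosSemidef)
    (S : Finset (Fin NB)) :
    (blockSub Ω S S).det ≤ ∏ i ∈ S, (blockSub N {i} {i} + blockSub Ω {i} {i}).det :=
  calc (blockSub Ω S S).det
      ≤ (blockSub Ω S S + blockSub N S S).det :=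
        (hΩ.blockSub S).posSemidef.det_le_det_add (hN.submatrix _)
    _ = (blockSub (N + Ω) S S).det := by rw [add_comm]; rfl
    _ ≤ ∏ i ∈ S, (blockSub (N + Ω) {i} {i}).det :=
        det_blockSub_le_prod (.posSemidef_add hN hΩ) S

lemma logdet2_blockSub_union_le (hΩ : Ω.PosDef) {S U : Finset (Fin NB)} (hSU : Disjoint S U) :
    logdet2 (blockSub Ω (S ∪ U) (S ∪ U)) ≤
      logdet2 (blockSub Ω S S) + logdet2 (blockSub Ω U U) := by
  have h := det_blockSub_union_le hΩ hSU
  rw [← (hΩ.blockSub (S ∪ U)).ofReal_re_det, ← (hΩ.blockSub S).ofReal_re_det,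
    ← (hΩ.blockSub U).ofReal_re_det, ← Complex.ofReal_mul, Complex.real_le_real] at h
  rw [logdet2, logdet2, logdet2,
    ← Real.logb_mul (hΩ.blockSub S).re_det_pos.ne' (hΩ.blockSub U).re_det_pos.ne']
  exact Real.logb_le_logb_of_le one_lt_two (hΩ.blockSub _).re_det_pos h

lemma logdet2_blockSub_le_sum_logdet2_add (hΩ : Ω.PosDef) (hN : N.PosSemidef)
    (S : Finset (Fin NB)) :
    logdet2 (blockSub Ω S S) ≤ ∑ i ∈ S, logdet2 (blockSub N {i} {i} + blockSub Ω {i} {i}) := by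
  have hpos : ∀ i, (blockSub N {i} {i} + blockSub Ω {i} {i}).PosDef := fun i =>
    .posSemidef_add (hN.submatrix _) (hΩ.blockSub {i})
  have h := det_blockSub_le_prod_det_blockSub_add hΩ hN S
  rw [← (hΩ.blockSub S).ofReal_re_det, ← Finset.prod_congr rfl fun i _ => (hpos i).ofReal_re_det,
    ← Complex.ofReal_prod, Complex.real_le_real] at h
  simp only [logdet2]
  rw [← Real.logb_prod _ _ fun i _ => (hpos i).re_det_pos.ne']
  exact Real.logb_le_logb_of_le one_lt_two (hΩ.blockSub S).re_det_pos h

end blockSub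

section gFun

variable {NB nM : ℕ} {nb : Fin NB → ℕ} (A : Matrix (Σ i, Fin (nb i)) (Fin nM) ℂ)
  {Ω : Matrix (Σ i, Fin (nb i)) (Σ i, Fin (nb i)) ℂ}

lemma gFun_nonneg (hΩ : Ω.PosDef) (S : Finset (Fin NB)) : 0 ≤ gFun A Ω S :=
  sub_nonneg.mpr <|
    logdet2_blockSub_le_sum_logdet2_add hΩ (posSemidef_self_mul_conjTranspose A) S

lemma gFun_add_le_gFun_union (hΩ : Ω.PosDef) {S U : Finset (Fin NB)} (hSU : Disjoint S U) :
    gFun A Ω S + gFun A Ω U ≤ gFun A Ω (S ∪ U) := by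
  have h := logdet2_blockSub_union_le hΩ hSU
  rw [gFun, gFun, gFun, Finset.sum_union hSU]
  linarith

end gFun

/-- `g` is nonnegative and monotone nondecreasing. -/
theorem gFun_monotone {NB nM : ℕ} {nb : Fin NB → ℕ}
    (A : Matrix (Σ i, Fin (nb i)) (Fin nM) ℂ)
    (Ω : Matrix (Σ i, Fin (nb i)) (Σ i, Fin (nb i)) ℂ) (hΩ : Ω.PosDef)
    (S T : Finset (Fin NB)) (hST : S ⊆ T) :
    0 ≤ gFun A Ω S ∧ gFun A Ω S ≤ gFun A Ω T := by
  refine ⟨gFun_nonneg A hΩ S, ?_⟩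
  have h := gFun_add_le_gFun_union A hΩ (Finset.disjoint_sdiff : Disjoint S (T \ S))
  rw [Finset.union_sdiff_of_subset hST] at h
  linarith [gFun_nonneg A hΩ (T \ S)]
end

section
/- Fix the block setup, the functions $f_k, f'_k, g_S, g'_S$ and $\varphi$ as defined in the context, weights $w_1,\dots,w_N \ge 0$, and backhaul capacities $C_1,\dots,C_{N_B} \in \mathbb{R}$. Let $(R^t, \Omega^t)$ and $(R^{t+1}, \Omega^{t+1})$ be tuples with each $R^t_j, R^{t+1}_j$ Hermitian positive semidefinite and $\Omega^t, \Omega^{t+1}$ Hermitian positive definite. Suppose that (a) $g'_S(R^{t+1},\Omega^{t+1}; R^t,\Omega^t) \le \sum_{i \in S} C_i$ for all $S \subseteq \{1,\dots,N_B\}$, and (b) $\sum_{k=1}^{N} w_k f'_k(R^{t+1},\Omega^{t+1}; R^t,\Omega^t) \ge \sum_{k=1}^{N} w_k f'_k(R^t,\Omega^t; R^t,\Omega^t)$. Then $g_S(R^{t+1},\Omega^{t+1}) \le \sum_{i \in S} C_i$ for all $S \subseteq \{1,\dots,N_B\}$, and $\sum_{k=1}^{N} w_k f_k(R^{t+1},\Omega^{t+1})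 \ge \sum_{k=1}^{N} w_k f_k(R^t,\Omega^t)$. -/
open Matrix
open scoped ComplexOrder

/-- The first-order surrogate `φ(X,Y) = log₂ det Y + (1/ln 2) tr(Y⁻¹(X-Y))`. -/
noncomputable def phiSurr {ι : Type*} [Fintype ι] [DecidableEq ι]
    (X Y : Matrix ι ι ℂ) : ℝ :=
  logdet2 Y + (1 / Real.log 2) * (Y⁻¹ * (X - Y)).trace.re

/-- The achievable rate `f_k(R,Ω)` of mobile station `k`. -/
noncomputable def rateFk {NB m N : ℕ} {nb : Fin NB → ℕ}
    (H : Fin N → Matrix (Fin m) (Σ i, Fin (nb i)) ℂ) (k : Fin N)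
    (R : Fin N → Matrix (Σ i, Fin (nb i)) (Σ i, Fin (nb i)) ℂ)
    (Ω : Matrix (Σ i, Fin (nb i)) (Σ i, Fin (nb i)) ℂ) : ℝ :=
  logdet2 (1 + H k * ((∑ j, R j) + Ω) * (H k)ᴴ) -
    logdet2 (1 + H k * ((∑ j ∈ Finset.univ \ {k}, R j) + Ω) * (H k)ᴴ)

/-- The MM surrogate `f'_k(R,Ω;R',Ω')` of `f_k`. -/
noncomputable def rateFk' {NB m N : ℕ} {nb : Fin NB → ℕ}
    (H : Fin N → Matrix (Fin m) (Σ i, Fin (nb i)) ℂ) (k : Fin N)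
    (R : Fin N → Matrix (Σ i, Fin (nb i)) (Σ i, Fin (nb i)) ℂ)
    (Ω : Matrix (Σ i, Fin (nb i)) (Σ i, Fin (nb i)) ℂ)
    (R' : Fin N → Matrix (Σ i, Fin (nb i)) (Σ i, Fin (nb i)) ℂ)
    (Ω' : Matrix (Σ i, Fin (nb i)) (Σ i, Fin (nb i)) ℂ) : ℝ :=
  logdet2 (1 + H k * ((∑ j, R j) + Ω) * (H k)ᴴ) -
    phiSurr (1 + H k * ((∑ j ∈ Finset.univ \ {k}, R j) + Ω) * (H k)ᴴ)
      (1 + H k * ((∑ j ∈ Finset.univ \ {k}, R' j) + Ω') * (H k)ᴴ)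

/-- The backhaul constraint function `g_S(R,Ω)`. -/
noncomputable def gRFun {NB N : ℕ} {nb : Fin NB → ℕ}
    (R : Fin N → Matrix (Σ i, Fin (nb i)) (Σ i, Fin (nb i)) ℂ)
    (Ω : Matrix (Σ i, Fin (nb i)) (Σ i, Fin (nb i)) ℂ) (S : Finset (Fin NB)) : ℝ :=
  (∑ i ∈ S, logdet2 (blockSub (∑ j, R j) {i} {i} + blockSub Ω {i} {i})) -
    logdet2 (blockSub Ω S S)

/-- The MM surrogate `g'_S(R,Ω;R',Ω')` of `g_S`. -/
noncomputable def gRFun' {NB N : ℕ} {nb : Fin NB → ℕ}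
    (R : Fin N → Matrix (Σ i, Fin (nb i)) (Σ i, Fin (nb i)) ℂ)
    (Ω : Matrix (Σ i, Fin (nb i)) (Σ i, Fin (nb i)) ℂ)
    (R' : Fin N → Matrix (Σ i, Fin (nb i)) (Σ i, Fin (nb i)) ℂ)
    (Ω' : Matrix (Σ i, Fin (nb i)) (Σ i, Fin (nb i)) ℂ) (S : Finset (Fin NB)) : ℝ :=
  (∑ i ∈ S, phiSurr (blockSub (∑ j, R j) {i} {i} + blockSub Ω {i} {i})
      (blockSub (∑ j, R' j) {i} {i} + blockSub Ω' {i} {i})) -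
    logdet2 (blockSub Ω S S)

/-!
The surrogate `φ(·, Y)` is the tangent of the concave function `log₂ det` at `Y`, so it majorises
`log₂ det`, with equality at `Y`. Hence `g_S ≤ g'_S` and `f'_k ≤ f_k` at the new iterate, while
`f'_k = f_k` at the old one: the surrogate constraints imply the true ones, and the surrogate
objective sandwiches the increase of the true one.
-/

namespace Matrix

variable {𝕜 n : Type*} [RCLike 𝕜] [Fintype n] [DecidableEq n]

lemma PosDef.ofReal_re_det_s12 {A : Matrix n n 𝕜} (hA : A.PosDef) :
    ((RCLike.re A.det : ℝ) : 𝕜) = A.det := by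
  rw [hA.isHermitian.det_eq_prod_eigenvalues]
  norm_cast

lemma PosDef.re_det_pos_s12 {A : Matrix n n 𝕜} (hA : A.PosDef) : 0 < RCLike.re A.det :=
  (RCLike.pos_iff.mp hA.det_pos).1

/-- `log λ ≤ λ - 1`, summed over the eigenvalues. -/
lemma PosDef.log_re_det_le_re_trace_sub_card {A : Matrix n n 𝕜} (hA : A.PosDef) :
    Real.log (RCLike.re A.det) ≤ RCLike.re A.trace - Fintype.card n := by
  have hdet : RCLike.re A.det = ∏ i, hA.1.eigenvalues i := by
    rw [hA.isHermitian.det_eq_prod_eigenvalues]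
    norm_cast
  have htr : RCLike.re A.trace = ∑ i, hA.1.eigenvalues i := by
    rw [hA.isHermitian.trace_eq_sum_eigenvalues]
    norm_cast
  rw [hdet, htr, Real.log_prod fun i _ => (hA.eigenvalues_pos i).ne', ← Finset.card_univ,
    Finset.cast_card, ← Finset.sum_sub_distrib]
  exact Finset.sum_le_sum fun i _ => Real.log_le_sub_one_of_pos (hA.eigenvalues_pos i)

open scoped MatrixOrder in
/-- Tangent inequality of the concave `log det`: apply `log det M ≤ tr M - n`
to `M = Y^{-1/2} X Y^{-1/2}`. -/
lemma PosDef.log_re_det_le {X Y : Matrix n n 𝕜} (hX : X.PosDef) (hY : Y.PosDef) :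
    Real.log (RCLike.re X.det) ≤
      Real.log (RCLike.re Y.det) + RCLike.re (Y⁻¹ * (X - Y)).trace := by
  set S := CFC.sqrt Y⁻¹
  have hSS : S * S = Y⁻¹ := CFC.sqrt_mul_sqrt_self _ hY.inv.posSemidef.nonneg
  have hS : IsUnit S := (CFC.isUnit_sqrt_iff _ hY.inv.posSemidef.nonneg).mpr hY.inv.isUnit
  have hSself : star S = S := (CFC.sqrt_nonneg Y⁻¹).isSelfAdjoint
  have hM : (S * X * S).PosDef := by
    simpa [hSself] using hS.posDef_star_left_conjugate_iff.mpr hX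
  have hdet : RCLike.re (S * X * S).det = (RCLike.re Y.det)⁻¹ * RCLike.re X.det := by
    have h : (S * X * S).det = Y.det⁻¹ * X.det := by
      rw [det_mul, det_mul, mul_right_comm, ← det_mul, hSS, det_nonsing_inv,
        Ring.inverse_eq_inv']
    rw [← hY.ofReal_re_det_s12, ← hX.ofReal_re_det_s12, ← hM.ofReal_re_det_s12] at h
    exact_mod_cast h
  have htr : RCLike.re (Y⁻¹ * (X - Y)).trace = RCLike.re (S * X * S).trace - Fintype.card n := by
    rw [mul_sub, nonsing_inv_mul _ ((isUnit_iff_isUnit_det _).mp hY.isUnit), trace_sub,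
      trace_one, map_sub, RCLike.natCast_re, trace_mul_cycle, hSS]
  have key := hM.log_re_det_le_re_trace_sub_card
  rw [hdet, Real.log_mul (inv_pos.2 hY.re_det_pos_s12).ne' hX.re_det_pos_s12.ne', Real.log_inv] at key
  linarith

lemma posDef_one_add_mul_mul_conjTranspose {m : Type*} [Fintype m] {A : Matrix m m 𝕜}
    (hA : A.PosSemidef) (B : Matrix n m 𝕜) : (1 + B * A * Bᴴ).PosDef :=
  PosDef.one.add_posSemidef (hA.mul_mul_conjTranspose_same B)

end Matrix

section Surrogate

variable {ι : Type*} [Fintype ι] [DecidableEq ι]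

lemma logdet2_le_phiSurr {X Y : Matrix ι ι ℂ} (hX : X.PosDef) (hY : Y.PosDef) :
    logdet2 X ≤ phiSurr X Y := by
  have h := hX.log_re_det_le hY
  simp only [RCLike.re_to_complex] at h
  rw [logdet2, phiSurr, logdet2, Real.logb, Real.logb, one_div_mul_eq_div, ← add_div]
  exact div_le_div_of_nonneg_right h (Real.log_pos one_lt_two).le

lemma phiSurr_self (X : Matrix ι ι ℂ) : phiSurr X X = logdet2 X := by
  simp [phiSurr]

end Surrogate

section Rates

variable {NB m N : ℕ} {nb : Fin NB → ℕ}
  {R R' : Fin N → Matrix (Σ i, Fin (nb i)) (Σ i, Fin (nb i)) ℂ}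
  {Ω Ω' : Matrix (Σ i, Fin (nb i)) (Σ i, Fin (nb i)) ℂ}

lemma rateFk'_self (H : Fin N → Matrix (Fin m) (Σ i, Fin (nb i)) ℂ) (k : Fin N) :
    rateFk' H k R Ω R Ω = rateFk H k R Ω := by
  rw [rateFk', rateFk, phiSurr_self]

lemma rateFk'_le_rateFk (H : Fin N → Matrix (Fin m) (Σ i, Fin (nb i)) ℂ) (k : Fin N)
    (hR : ∀ j, (R j).PosSemidef) (hR' : ∀ j, (R' j).PosSemidef)
    (hΩ : Ω.PosSemidef) (hΩ' : Ω'.PosSemidef) :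
    rateFk' H k R Ω R' Ω' ≤ rateFk H k R Ω := by
  refine sub_le_sub_left (logdet2_le_phiSurr ?_ ?_) _
  · exact posDef_one_add_mul_mul_conjTranspose ((posSemidef_sum _ fun j _ => hR j).add hΩ) _
  · exact posDef_one_add_mul_mul_conjTranspose ((posSemidef_sum _ fun j _ => hR' j).add hΩ') _

lemma gRFun_le_gRFun' (hR : ∀ j, (R j).PosSemidef) (hR' : ∀ j, (R' j).PosSemidef)
    (hΩ : Ω.PosDef) (hΩ' : Ω'.PosDef) (S : Finset (Fin NB)) :
    gRFun R Ω S ≤ gRFun' R Ω R' Ω' S := by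
  refine sub_le_sub_right (Finset.sum_le_sum fun i _ => logdet2_le_phiSurr ?_ ?_) _
  · exact (hΩ.submatrix Subtype.val_injective).posSemidef_add
      ((posSemidef_sum _ fun j _ => hR j).submatrix _)
  · exact (hΩ'.submatrix Subtype.val_injective).posSemidef_add
      ((posSemidef_sum _ fun j _ => hR' j).submatrix _)

end Rates

/-- Per-iteration correctness of the MM algorithm: the new iterate of the
convexified subproblem is feasible for the original backhaul constraints and does
not decrease the true weighted sum-rate objective. -/
theorem mm_iteration_correct {NB m N : ℕ} {nb : Fin NB → ℕ}
    (H : Fin N → Matrix (Fin m) (Σ i, Fin (nb i)) ℂ)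
    (w : Fin N → ℝ) (hw : ∀ k, 0 ≤ w k) (C : Fin NB → ℝ)
    (Rt Rt1 : Fin N → Matrix (Σ i, Fin (nb i)) (Σ i, Fin (nb i)) ℂ)
    (Ωt Ωt1 : Matrix (Σ i, Fin (nb i)) (Σ i, Fin (nb i)) ℂ)
    (hRt : ∀ j, (Rt j).PosSemidef) (hRt1 : ∀ j, (Rt1 j).PosSemidef)
    (hΩt : Ωt.PosDef) (hΩt1 : Ωt1.PosDef)
    (ha : ∀ S : Finset (Fin NB), gRFun' Rt1 Ωt1 Rt Ωt S ≤ ∑ i ∈ S, C i)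
    (hb : ∑ k, w k * rateFk' H k Rt Ωt Rt Ωt ≤ ∑ k, w k * rateFk' H k Rt1 Ωt1 Rt Ωt) :
    (∀ S : Finset (Fin NB), gRFun Rt1 Ωt1 S ≤ ∑ i ∈ S, C i) ∧
      ∑ k, w k * rateFk H k Rt Ωt ≤ ∑ k, w k * rateFk H k Rt1 Ωt1 := by
  refine ⟨fun S => (gRFun_le_gRFun' hRt1 hRt hΩt1 hΩt S).trans (ha S), ?_⟩
  calc ∑ k, w k * rateFk H k Rt Ωt = ∑ k, w k * rateFk' H k Rt Ωt Rt Ωt := by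
        simp only [rateFk'_self]
    _ ≤ ∑ k, w k * rateFk' H k Rt1 Ωt1 Rt Ωt := hb
    _ ≤ ∑ k, w k * rateFk H k Rt1 Ωt1 := by
        gcongr with k
        · exact hw k
        · exact rateFk'_le_rateFk H k hRt1 hRt hΩt1.posSemidef hΩt.posSemidef
end
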